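/- Fix ε ∈ (0, 1/16) and a nonzero integer u. For each prime p with p ∤ u and each primitive root τ_p mod p, define U_p = (1/p)·∑_{k=1}^{p−1} e(−u·k/p) and V_p = ∑_{1 ≤ n ≤ p−1, gcd(n,p−1)=1} e(τ_pⁿ/p). Then there exist constants C > 0 and x₀ ≥ 2 such that for all x ≥ x₀ and every choice of a primitive root τ_p mod p for each prime p ∈ [x, 2x] with p ∤ u, one has ∑_{x ≤ p ≤ 2x, p prime, p ∤ u} |U_p·V_p| ≤ C · x^{1−ε}/log x. -/

import Mathlib

/-!
Since `p ∤ u`, the sum over `k` is a complete character sum minus its `k = 0` term, so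
`U_p = -1/p`. Detecting `gcd(n, p - 1) = 1` by Möbius inversion writes `V_p` as
`∑_{d ∣ p - 1} μ(d) η_d`, where `η_d` is the Gauss period of the subgroup of `𝔽_p^×` generated
by `τ_p^d`. A Gauss period `η(a) = ∑_{h ∈ H} ψ(a h)` is constant on `H`, while
`∑_a |η(a)|² = p |H|` by orthogonality of `ψ`; hence `|η(1)| ≤ √p` and
`|V_p| ≤ 2^{ω(p - 1)} √p`. As `2^{ω(m)} ≤ 8 m^{2/5}` (every prime `q ≥ 7` has `2 ≤ q^{2/5}`), each
term is `O(p^{-1/10})`, and the `O(x)` terms with `p ∈ [x, 2x]` add up to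
`O(x^{9/10}) = O(x^{15/16} / log x)`.
-/

open Finset Complex
open scoped ArithmeticFunction.Moebius Real

namespace ArithmeticFunction

lemma sum_divisors_moebius (n : ℕ) : ∑ d ∈ n.divisors, μ d = if n = 1 then 1 else 0 := by
  have := congr($(moebius_mul_coe_zeta) n)
  rwa [coe_mul_zeta_apply, one_apply] at this

lemma sum_divisors_filter_dvd_moebius {m : ℕ} (hm : m ≠ 0) (n : ℕ) :
    ∑ d ∈ m.divisors with d ∣ n, μ d = if n.Coprime m then 1 else 0 := by
  have : {d ∈ m.divisors | d ∣ n} = (n.gcd m).divisors := by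
    rw [← Nat.divisors_filter_dvd_of_dvd hm (Nat.gcd_dvd_right n m)]
    exact filter_congr fun d hd => by
      rw [Nat.dvd_gcd_iff, and_iff_left (Nat.dvd_of_mem_divisors hd)]
  rw [this, sum_divisors_moebius]

lemma sum_filter_coprime_eq_sum_moebius_smul {M : Type*} [AddCommGroup M] {m : ℕ} (hm : m ≠ 0)
    (s : Finset ℕ) (f : ℕ → M) :
    ∑ n ∈ s with n.Coprime m, f n = ∑ d ∈ m.divisors, μ d • ∑ n ∈ s with d ∣ n, f n := by
  simp_rw [smul_sum, sum_filter]
  rw [sum_comm]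
  refine sum_congr rfl fun n _ => ?_
  rw [← sum_filter, ← sum_smul, sum_divisors_filter_dvd_moebius hm, ite_smul, one_smul, zero_smul]

lemma sum_divisors_abs_moebius {m : ℕ} (hm : m ≠ 0) :
    ∑ d ∈ m.divisors, |μ d| = 2 ^ #m.primeFactors := by
  simp_rw [abs_moebius]
  rw [← sum_filter, Nat.sum_divisors_filter_squarefree hm]
  simp [Nat.factors_eq]

end ArithmeticFunction

namespace Finset

lemma sum_Icc_one_eq_sum_range_of_eq {M : Type*} [AddCancelCommMonoid M] {f : ℕ → M} {n : ℕ}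
    (h : f n = f 0) : ∑ k ∈ Icc 1 n, f k = ∑ k ∈ range n, f k := by
  have : f 0 + ∑ k ∈ Icc 1 n, f k = ∑ k ∈ range n, f k + f n := by
    rw [← sum_range_succ, range_eq_Ico, sum_eq_sum_Ico_succ_bot (by omega), zero_add,
      Ico_add_one_right_eq_Icc]
  rw [h, add_comm] at this
  exact add_right_cancel this

lemma sum_range_filter_dvd {M : Type*} [AddCommMonoid M] {d m : ℕ} (hd : d ∣ m) (f : ℕ → M) :
    ∑ n ∈ range m with d ∣ n, f n = ∑ k ∈ range (m / d), f (d * k) := by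
  obtain ⟨c, rfl⟩ := hd
  rcases eq_or_ne d 0 with rfl | hd0
  · simp
  have : {n ∈ range (d * c) | d ∣ n} = (range c).image (d * ·) := by
    ext n
    simp only [mem_filter, mem_range, mem_image]
    constructor
    · rintro ⟨hn, k, rfl⟩
      exact ⟨k, lt_of_mul_lt_mul_left hn (Nat.zero_le d), rfl⟩
    · rintro ⟨k, hk, rfl⟩
      exact ⟨by gcongr, dvd_mul_right d k⟩
  rw [this, sum_image fun _ _ _ _ h => Nat.eq_of_mul_eq_mul_left (Nat.pos_of_ne_zero hd0) h,
    Nat.mul_div_cancel_left c (Nat.pos_of_ne_zero hd0)]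

end Finset

namespace AddChar

variable {R : Type*} [CommRing R]

noncomputable def gaussPeriod (ψ : AddChar R ℂ) (H : Subgroup Rˣ) [Fintype H] (a : R) : ℂ :=
  ∑ h : H, ψ (a * ((h : Rˣ) : R))

variable {ψ : AddChar R ℂ} {H : Subgroup Rˣ} [Fintype H]

lemma gaussPeriod_mul_of_mem (a : R) {g : Rˣ} (hg : g ∈ H) :
    gaussPeriod ψ H (a * g) = gaussPeriod ψ H a := by
  refine Fintype.sum_equiv (Equiv.mulLeft ⟨g, hg⟩) _ _ fun h => ?_
  simp [mul_assoc]

variable [Fintype R] [DecidableEq R]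

lemma sum_norm_sq_gaussPeriod (hψ : ψ.IsPrimitive) :
    ∑ a, ‖gaussPeriod ψ H a‖ ^ 2 = Fintype.card R * Fintype.card H := by
  have hsq : ∀ a, (‖gaussPeriod ψ H a‖ : ℂ) ^ 2
      = ∑ h : H, ∑ h' : H, ψ (a * (((h : Rˣ) : R) - ((h' : Rˣ) : R))) := by
    intro a
    rw [← Complex.mul_conj', gaussPeriod, map_sum, sum_mul_sum]
    simp only [← map_neg_eq_conj, ← map_add_eq_mul, sub_eq_add_neg, mul_add, mul_neg]
  have hdiff : ∀ h h' : H, ((h : Rˣ) : R) - ((h' : Rˣ) : R) = 0 ↔ h' = h := by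
    intro h h'
    rw [sub_eq_zero, Units.val_inj, Subtype.coe_inj, eq_comm]
  apply Complex.ofReal_injective
  push_cast
  calc ∑ a, (‖gaussPeriod ψ H a‖ : ℂ) ^ 2
      = ∑ h : H, ∑ h' : H, ∑ a, ψ (a * (((h : Rˣ) : R) - ((h' : Rˣ) : R))) := by
        simp_rw [hsq]
        rw [sum_comm]
        exact sum_congr rfl fun _ _ => sum_comm
    _ = Fintype.card R * Fintype.card H := by
        simp [sum_mulShift _ hψ, hdiff, mul_comm]

lemma norm_gaussPeriod_one_le (hψ : ψ.IsPrimitive) :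
    ‖gaussPeriod ψ H 1‖ ≤ √(Fintype.card R) := by
  have hinj : Function.Injective fun h : H => ((h : Rˣ) : R) :=
    Units.val_injective.comp Subtype.val_injective
  have hle : Fintype.card H * ‖gaussPeriod ψ H 1‖ ^ 2 ≤ Fintype.card R * Fintype.card H := by
    calc Fintype.card H * ‖gaussPeriod ψ H 1‖ ^ 2
        = ∑ h : H, ‖gaussPeriod ψ H ((h : Rˣ) : R)‖ ^ 2 := by
          have hconst (h : H) : gaussPeriod ψ H ((h : Rˣ) : R) = gaussPeriod ψ H 1 := by
            simpa using gaussPeriod_mul_of_mem (ψ := ψ) 1 h.2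
          simp [hconst]
      _ = ∑ a ∈ univ.map ⟨_, hinj⟩, ‖gaussPeriod ψ H a‖ ^ 2 := by rw [sum_map]; rfl
      _ ≤ ∑ a, ‖gaussPeriod ψ H a‖ ^ 2 :=
          sum_le_sum_of_subset_of_nonneg (subset_univ _) fun _ _ _ => by positivity
      _ = Fintype.card R * Fintype.card H := sum_norm_sq_gaussPeriod hψ
  rw [mul_comm (Fintype.card R : ℝ)] at hle
  exact Real.le_sqrt_of_sq_le (le_of_mul_le_mul_left hle (by exact_mod_cast Fintype.card_pos))

lemma gaussPeriod_zpowers_one (g : Rˣ) :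
    gaussPeriod ψ (Subgroup.zpowers g) 1 = ∑ k ∈ range (orderOf g), ψ ((g : R) ^ k) := by
  rw [gaussPeriod, ← Fin.sum_univ_eq_sum_range]
  refine (Fintype.sum_equiv (finEquivZPowers (isOfFinOrder_of_finite g)) _ _ fun k => ?_).symm
  simp [finEquivZPowers_apply]

lemma norm_sum_range_orderOf_le (hψ : ψ.IsPrimitive) (g : Rˣ) :
    ‖∑ k ∈ range (orderOf g), ψ ((g : R) ^ k)‖ ≤ √(Fintype.card R) :=
  gaussPeriod_zpowers_one (ψ := ψ) g ▸ norm_gaussPeriod_one_le hψ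

theorem norm_sum_pow_coprime_orderOf_le (hψ : ψ.IsPrimitive) (g : Rˣ) :
    ‖∑ n ∈ Icc 1 (orderOf g) with n.Coprime (orderOf g), ψ ((g : R) ^ n)‖
      ≤ 2 ^ #(orderOf g).primeFactors * √(Fintype.card R) := by
  set m := orderOf g
  have hm : m ≠ 0 := (orderOf_pos g).ne'
  have hinner : ∀ d ∈ m.divisors,
      ‖∑ n ∈ range m with d ∣ n, ψ ((g : R) ^ n)‖ ≤ √(Fintype.card R) := by
    intro d hd
    have hdm := Nat.dvd_of_mem_divisors hd
    rw [sum_range_filter_dvd hdm, ← orderOf_pow_of_dvd (Nat.pos_of_mem_divisors hd).ne' hdm]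
    simpa [pow_mul] using norm_sum_range_orderOf_le hψ (g ^ d)
  have hperiod : (g : R) ^ m = (g : R) ^ 0 := by
    rw [← Units.val_pow_eq_pow_val, pow_orderOf_eq_one, pow_zero, Units.val_one]
  rw [sum_filter, sum_Icc_one_eq_sum_range_of_eq (by simp [Nat.coprime_self, hperiod]),
    ← sum_filter, ArithmeticFunction.sum_filter_coprime_eq_sum_moebius_smul hm]
  calc _ ≤ ∑ d ∈ m.divisors, |(μ d : ℝ)| * √(Fintype.card R) := by
        refine (norm_sum_le _ _).trans (sum_le_sum fun d hd => ?_)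
        refine (norm_smul_le _ _).trans ?_
        rw [Int.norm_eq_abs]
        gcongr
        exact hinner d hd
    _ = 2 ^ #m.primeFactors * √(Fintype.card R) := by
        rw [← sum_mul]
        congr 1
        exact_mod_cast ArithmeticFunction.sum_divisors_abs_moebius hm

end AddChar

lemma Real.two_le_rpow_two_fifths {q : ℝ} (hq : 7 ≤ q) : 2 ≤ q ^ (2 / 5 : ℝ) := by
  refine le_of_pow_le_pow_left₀ (n := 5) (by norm_num) (by positivity) ?_
  rw [← Real.rpow_mul_natCast (by linarith)]
  norm_num
  nlinarith

namespace Nat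

lemma card_primeFactors_le_card_filter_add_three (m : ℕ) :
    #m.primeFactors ≤ #{q ∈ m.primeFactors | 7 ≤ q} + 3 := by
  rw [← card_filter_add_card_filter_not (7 ≤ ·)]
  gcongr
  refine (card_le_card (t := {2, 3, 5}) fun q hq => ?_).trans card_le_three
  obtain ⟨hqm, hq7⟩ := mem_filter.1 hq
  have hq := prime_of_mem_primeFactors hqm
  interval_cases q <;> norm_num at hq <;> simp

lemma seven_pow_card_filter_primeFactors_le {m : ℕ} (hm : m ≠ 0) :
    7 ^ #{q ∈ m.primeFactors | 7 ≤ q} ≤ m :=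
  (pow_card_le_prod _ _ _ fun _ hq => (mem_filter.1 hq).2).trans <| Nat.le_of_dvd
    (Nat.pos_of_ne_zero hm) <| (prod_dvd_prod_of_subset _ _ _ (filter_subset _ _)).trans
      (prod_primeFactors_dvd m)

theorem two_pow_card_primeFactors_le {m : ℕ} (hm : m ≠ 0) :
    (2 : ℝ) ^ #m.primeFactors ≤ 8 * (m : ℝ) ^ (2 / 5 : ℝ) := by
  set k := #{q ∈ m.primeFactors | 7 ≤ q}
  calc (2 : ℝ) ^ #m.primeFactors ≤ 2 ^ (k + 3) :=
        pow_le_pow_right₀ (by norm_num) (card_primeFactors_le_card_filter_add_three m)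
    _ = 8 * 2 ^ k := by ring
    _ ≤ 8 * ((7 : ℝ) ^ (2 / 5 : ℝ)) ^ k := by
        gcongr
        exact Real.two_le_rpow_two_fifths le_rfl
    _ = 8 * ((7 ^ k : ℕ) : ℝ) ^ (2 / 5 : ℝ) := by
        rw [Real.rpow_pow_comm (by norm_num)]
        push_cast
        rfl
    _ ≤ 8 * (m : ℝ) ^ (2 / 5 : ℝ) := by
        gcongr
        exact_mod_cast seven_pow_card_filter_primeFactors_le hm

end Nat

namespace ZMod

lemma exp_two_pi_I_mul_intCast_div (N : ℕ) [NeZero N] (j : ℤ) :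
    exp (2 * π * I * (j / N)) = stdAddChar (j : ZMod N) := by
  rw [stdAddChar_coe, mul_div_assoc]

lemma sum_Icc_natCast_eq_sum_erase_zero {M : Type*} [AddCommMonoid M] (N : ℕ) [NeZero N]
    (f : ZMod N → M) : ∑ k ∈ Icc 1 (N - 1), f k = ∑ z ∈ univ.erase 0, f z := by
  refine sum_nbij' (↑) val (fun k hk => ?_) (fun z hz => ?_) (fun k hk => ?_)
    (fun z _ => natCast_zmod_val z) fun _ _ => rfl
  · rw [mem_Icc] at hk
    rw [mem_erase, Ne, natCast_eq_zero_iff]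
    exact ⟨fun h => by have := Nat.le_of_dvd (by omega) h; omega, mem_univ _⟩
  · have := val_lt z
    have := (val_eq_zero z).not.2 (ne_of_mem_erase hz)
    rw [mem_Icc]
    omega
  · rw [mem_Icc] at hk
    exact val_cast_of_lt (by omega)

theorem sum_Icc_exp_neg_mul_div_eq_neg_one (N : ℕ) [NeZero N] {u : ℤ} (hu : ¬ (N : ℤ) ∣ u) :
    ∑ k ∈ Icc 1 (N - 1), exp (2 * π * I * (-(u : ℂ) * (k : ℂ) / (N : ℂ))) = -1 := by
  have hterm (k : ℕ) : exp (2 * π * I * (-(u : ℂ) * (k : ℂ) / (N : ℂ)))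
      = stdAddChar ((k : ZMod N) * ((-u : ℤ) : ZMod N)) := by
    have : (k : ZMod N) * ((-u : ℤ) : ZMod N) = ((-u * k : ℤ) : ZMod N) := by push_cast; ring
    rw [this, ← exp_two_pi_I_mul_intCast_div]
    push_cast
    ring_nf
  have hu' : ((-u : ℤ) : ZMod N) ≠ 0 := by rwa [Ne, intCast_zmod_eq_zero_iff_dvd, dvd_neg]
  simp_rw [hterm]
  rw [sum_Icc_natCast_eq_sum_erase_zero N (fun z => stdAddChar (z * _)),
    sum_erase_eq_sub (mem_univ 0), AddChar.sum_mulShift _ (isPrimitive_stdAddChar N), if_neg hu']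
  simp

theorem norm_sum_exp_pow_coprime_le {p : ℕ} [Fact p.Prime] {τ : ℤ}
    (hτ : orderOf (τ : ZMod p) = p - 1) :
    ‖∑ n ∈ Icc 1 (p - 1) with Nat.gcd n (p - 1) = 1, exp (2 * π * I * ((τ : ℂ) ^ n / (p : ℂ)))‖
      ≤ 2 ^ #(p - 1).primeFactors * √p := by
  have hp := (Fact.out : p.Prime).two_le
  obtain ⟨g, hg⟩ := (orderOf_ne_zero_iff.1 (by omega : orderOf (τ : ZMod p) ≠ 0)).isUnit
  have hterm (n : ℕ) :
      exp (2 * π * I * ((τ : ℂ) ^ n / (p : ℂ))) = stdAddChar ((g : ZMod p) ^ n) := by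
    rw [hg, ← Int.cast_pow, exp_two_pi_I_mul_intCast_div, Int.cast_pow]
  have hord : orderOf g = p - 1 := by rw [← orderOf_units, hg, hτ]
  simp_rw [hterm]
  simpa [hord, ZMod.card] using AddChar.norm_sum_pow_coprime_orderOf_le (isPrimitive_stdAddChar p) g

end ZMod

lemma Real.rpow_le_rpow_add_div_log {x : ℝ} (hx : 1 < x) (a : ℝ) {δ : ℝ} (hδ : 0 < δ) :
    x ^ a ≤ δ⁻¹ * x ^ (a + δ) / Real.log x := by
  have hx0 : 0 < x := by linarith
  rw [le_div_iff₀ (Real.log_pos hx)]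
  calc x ^ a * Real.log x ≤ x ^ a * (x ^ δ / δ) := by
        gcongr
        exact Real.log_le_rpow_div hx0.le hδ
    _ = δ⁻¹ * x ^ (a + δ) := by rw [Real.rpow_add hx0]; ring

lemma Real.rpow_nine_tenths_le_div_log {x ε : ℝ} (hx : 1 < x) (hε : ε ≤ 1 / 16) :
    x ^ (9 / 10 : ℝ) ≤ 80 / 3 * x ^ (1 - ε) / Real.log x := by
  refine (Real.rpow_le_rpow_add_div_log hx _ (by norm_num : (0 : ℝ) < 3 / 80)).trans ?_
  norm_num
  gcongr
  · exact (Real.log_pos hx).le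
  · exact hx.le
  · linarith

lemma Nat.card_Icc_ceil_floor_two_mul_le {x : ℝ} (hx : 1 ≤ x) :
    (#(Icc ⌈x⌉₊ ⌊2 * x⌋₊) : ℝ) ≤ 3 * x := by
  have hcard : #(Icc ⌈x⌉₊ ⌊2 * x⌋₊) ≤ ⌊2 * x⌋₊ + 1 := by rw [Nat.card_Icc]; omega
  have hfloor := Nat.floor_le (by positivity : 0 ≤ 2 * x)
  have : (#(Icc ⌈x⌉₊ ⌊2 * x⌋₊) : ℝ) ≤ ⌊2 * x⌋₊ + 1 := by exact_mod_cast hcard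
  linarith

lemma norm_mul_sum_exp_le_rpow {p : ℕ} [Fact p.Prime] {u τ : ℤ} (hu : ¬ (p : ℤ) ∣ u)
    (hτ : orderOf (τ : ZMod p) = p - 1) :
    ‖((1 / (p : ℂ)) * ∑ k ∈ Icc 1 (p - 1), exp (2 * π * I * (-(u : ℂ) * (k : ℂ) / (p : ℂ)))) *
        ∑ n ∈ Icc 1 (p - 1) with Nat.gcd n (p - 1) = 1, exp (2 * π * I * ((τ : ℂ) ^ n / (p : ℂ)))‖
      ≤ 8 * (p : ℝ) ^ (-1 / 10 : ℝ) := by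
  have hp := (Fact.out : p.Prime).two_le
  have hp0 : (0 : ℝ) < p := by positivity
  have hω : (2 : ℝ) ^ #(p - 1).primeFactors ≤ 8 * (p : ℝ) ^ (2 / 5 : ℝ) := by
    refine (Nat.two_pow_card_primeFactors_le (by omega)).trans ?_
    gcongr
    exact_mod_cast p.sub_le 1
  rw [norm_mul, norm_mul, ZMod.sum_Icc_exp_neg_mul_div_eq_neg_one p hu]
  calc _ ≤ 1 / (p : ℝ) * (8 * (p : ℝ) ^ (2 / 5 : ℝ) * (p : ℝ) ^ (1 / 2 : ℝ)) := by
        rw [← Real.sqrt_eq_rpow]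
        simp only [norm_div, norm_one, norm_natCast, norm_neg, mul_one]
        gcongr
        exact (ZMod.norm_sum_exp_pow_coprime_le hτ).trans (by gcongr)
    _ = 8 * (p : ℝ) ^ (-1 / 10 : ℝ) := by
        rw [mul_assoc, ← Real.rpow_add hp0, one_div, ← Real.rpow_neg_one, mul_left_comm,
          ← Real.rpow_add hp0]
        norm_num

theorem holder_product_estimate_general (ε : ℝ) (hε' : ε < 1/16) (u : ℤ) :
    ∃ C > (0:ℝ), ∃ x₀ : ℝ, x₀ ≥ 2 ∧ ∀ x : ℝ, x ≥ x₀ →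
      ∀ τ : ℕ → ℤ,
      (∀ p : ℕ, p.Prime → x ≤ (p:ℝ) → (p:ℝ) ≤ 2*x → ¬ (p:ℤ) ∣ u →
          orderOf ((τ p : ZMod p)) = p - 1) →
      ∑ p ∈ (Finset.Icc ⌈x⌉₊ ⌊2*x⌋₊).filter (fun p : ℕ => p.Prime ∧ ¬ ((p:ℤ) ∣ u)),
          norm
            (((1 / (p:ℂ)) * ∑ k ∈ Finset.Icc 1 (p-1),
                Complex.exp (2 * Real.pi * Complex.I * (-(u:ℂ) * (k:ℂ) / (p:ℂ)))) *
              (∑ n ∈ (Finset.Icc 1 (p-1)).filter (fun n => Nat.gcd n (p-1) = 1),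
                Complex.exp (2 * Real.pi * Complex.I * ((τ p : ℂ) ^ n / (p:ℂ)))))
        ≤ C * x ^ (1 - ε) / Real.log x := by
  refine ⟨640, by norm_num, 2, le_rfl, fun x hx τ hτ => ?_⟩
  have hx0 : 0 < x := by linarith
  set F := (Icc ⌈x⌉₊ ⌊2 * x⌋₊).filter (fun p : ℕ => p.Prime ∧ ¬ ((p : ℤ) ∣ u))
  have hcard : (#F : ℝ) ≤ 3 * x :=
    (Nat.cast_le.2 (card_filter_le _ _)).trans (Nat.card_Icc_ceil_floor_two_mul_le (by linarith))
  refine (sum_le_card_nsmul F _ (8 * x ^ (-1 / 10 : ℝ)) fun p hp => ?_).trans ?_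
  · obtain ⟨hpI, hprime, hpu⟩ := mem_filter.1 hp
    have : Fact p.Prime := ⟨hprime⟩
    have hxp : x ≤ p := Nat.ceil_le.1 (mem_Icc.1 hpI).1
    have hp2x : (p : ℝ) ≤ 2 * x := (Nat.le_floor_iff (by positivity)).1 (mem_Icc.1 hpI).2
    refine (norm_mul_sum_exp_le_rpow hpu (hτ p hprime hxp hp2x hpu)).trans ?_
    gcongr 8 * ?_
    exact Real.rpow_le_rpow_of_nonpos hx0 hxp (by norm_num)
  calc #F • (8 * x ^ (-1 / 10 : ℝ)) ≤ 3 * x * (8 * x ^ (-1 / 10 : ℝ)) := by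
        rw [nsmul_eq_mul]
        gcongr
    _ = 24 * x ^ (9 / 10 : ℝ) := by
        rw [show (9 / 10 : ℝ) = 1 + -1 / 10 by norm_num, Real.rpow_add hx0, Real.rpow_one]
        ring
    _ ≤ 24 * (80 / 3 * x ^ (1 - ε) / Real.log x) := by
        gcongr
        exact Real.rpow_nine_tenths_le_div_log (by linarith) hε'.le
    _ = 640 * x ^ (1 - ε) / Real.log x := by ring

/-- Fix `ε ∈ (0,1/16)` and `u ≠ 0`. With `U_p = (1/p)∑_{k=1}^{p−1} e(−uk/p)` and
`V_p = ∑_{gcd(n,p−1)=1} e(τ_pⁿ/p)`, there are `C > 0` and `x₀ ≥ 2` such that for all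
`x ≥ x₀` and any choice of primitive roots `τ_p` mod `p` for primes `p ∈ [x,2x]`, `p ∤ u`:
`∑_{x ≤ p ≤ 2x, p ∤ u} |U_p·V_p| ≤ C·x^{1−ε}/log x`. -/
theorem holder_product_estimate (ε : ℝ) (hε : 0 < ε) (hε' : ε < 1/16) (u : ℤ) (hu : u ≠ 0) :
    ∃ C > (0:ℝ), ∃ x₀ : ℝ, x₀ ≥ 2 ∧ ∀ x : ℝ, x ≥ x₀ →
      ∀ τ : ℕ → ℤ,
      (∀ p : ℕ, p.Prime → x ≤ (p:ℝ) → (p:ℝ) ≤ 2*x → ¬ (p:ℤ) ∣ u →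
          orderOf ((τ p : ZMod p)) = p - 1) →
      ∑ p ∈ (Finset.Icc ⌈x⌉₊ ⌊2*x⌋₊).filter (fun p : ℕ => p.Prime ∧ ¬ ((p:ℤ) ∣ u)),
          norm
            (((1 / (p:ℂ)) * ∑ k ∈ Finset.Icc 1 (p-1),
                Complex.exp (2 * Real.pi * Complex.I * (-(u:ℂ) * (k:ℂ) / (p:ℂ)))) *
              (∑ n ∈ (Finset.Icc 1 (p-1)).filter (fun n => Nat.gcd n (p-1) = 1),
                Complex.exp (2 * Real.pi * Complex.I * ((τ p : ℂ) ^ n / (p:ℂ)))))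
        ≤ C * x ^ (1 - ε) / Real.log x :=
  holder_product_estimate_general ε hε' u
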